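/- arXiv:1005.5449 — 2 statements merged into one kernel-verified Lean document; each statement's English description precedes it below -/
import Mathlib

section
/- Define a recurrence bound: let λ ∈ (0,1), and suppose T : ℝ≥0 → ℝ≥0 satisfies T(k) = 0 for all k ≤ γ and T(k) ≤ max_{1/3 ≤ α ≤ 2/3} [T(αk + c·k^λ + c) + T((1−α)k + c·k^λ + c)] + c·k^λ + c for k > γ, where c > 0 is a constant. Then for every ε > 0 there exists a choice of γ (depending on ε, λ, c) such that T(k) ≤ ε·k for all k ≥ 0. -/
/-!
Take the potential `Φ(x) = A x - D x^λ` with `A = min ε 1` and `D = 6c / (r - 1)`, where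
`r = (1/3)^λ + (2/3)^λ > 1`. By concavity of `x ↦ x^λ`, splitting `k` into two pieces of relative
sizes in `[1/3, 2/3]` gains `(r - 1) k^λ` in the sublinear part of `Φ`, which pays for the additive
overhead `c k^λ + c` of the recurrence. Once `γ` is so large that this overhead is at most `k / 12`
and `Φ ≥ 0` beyond `γ / 3`, every argument in the recurrence lies in `[γ/3, 3k/4]`, so induction
over the scales `γ (4/3)^n` gives `T ≤ Φ ≤ ε x` on `[γ/3, ∞)`.
-/

open Set Filter Topology

lemma forall_ge_of_contracting_step {P : ℝ → Prop} {a b q : ℝ} (hb : 0 < b) (hq0 : 0 < q)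
    (hq1 : q < 1) (base : ∀ x, a ≤ x → x ≤ b → P x)
    (step : ∀ k, b < k → (∀ x, a ≤ x → x ≤ q * k → P x) → P k) :
    ∀ x, a ≤ x → P x := by
  have scale : ∀ n : ℕ, ∀ x, a ≤ x → x ≤ b * q⁻¹ ^ n → P x := by
    intro n
    induction n with
    | zero => simpa using base
    | succ n ih =>
      intro x hax hx
      rcases le_or_gt x b with hxb | hxb
      · exact base x hax hxb
      · refine step x hxb fun y hay hy => ih y hay ?_
        calc y ≤ q * x := hy
          _ ≤ q * (b * q⁻¹ ^ (n + 1)) := by gcongr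
          _ = b * q⁻¹ ^ n := by rw [pow_succ']; field_simp
  intro x hax
  obtain ⟨n, hn⟩ := pow_unbounded_of_one_lt (x / b) (one_lt_inv₀ hq0 |>.2 hq1)
  exact scale n x hax ((div_lt_iff₀' hb).1 hn).le

lemma eventually_mul_rpow_add_le {l : ℝ} (hl : l < 1) (C : ℝ) {δ : ℝ} (hδ : 0 < δ) :
    ∀ᶠ x in atTop, C * x ^ l + C ≤ δ * x := by
  have hlim : Tendsto (fun x : ℝ => C * x ^ (l - 1) + C * x⁻¹) atTop (𝓝 0) := by
    have h := ((tendsto_rpow_neg_atTop (sub_pos.2 hl)).const_mul C).add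
      (tendsto_inv_atTop_zero.const_mul C)
    simpa [neg_sub] using h
  filter_upwards [hlim.eventually_lt_const hδ, eventually_gt_atTop 0] with x hx hx0
  have hdiv : C * x ^ l + C = (C * x ^ (l - 1) + C * x⁻¹) * x := by
    rw [Real.rpow_sub_one hx0.ne']
    field_simp
  rw [hdiv]
  gcongr

lemma one_lt_third_rpow_add_two_thirds_rpow {l : ℝ} (hl : l < 1) :
    1 < (1 / 3 : ℝ) ^ l + (2 / 3 : ℝ) ^ l := by
  have h₁ := Real.rpow_lt_rpow_of_exponent_gt (x := 1 / 3) (by norm_num) (by norm_num) hl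
  have h₂ := Real.rpow_lt_rpow_of_exponent_gt (x := 2 / 3) (by norm_num) (by norm_num) hl
  rw [Real.rpow_one] at h₁ h₂
  linarith

lemma third_rpow_add_two_thirds_rpow_le {l α : ℝ} (hl0 : 0 ≤ l) (hl1 : l ≤ 1)
    (hα : α ∈ Icc (1 / 3 : ℝ) (2 / 3)) :
    (1 / 3 : ℝ) ^ l + (2 / 3 : ℝ) ^ l ≤ α ^ l + (1 - α) ^ l := by
  obtain ⟨hα1, hα2⟩ := hα
  have hconc := Real.concaveOn_rpow hl0 hl1
  -- write `α` and `1 - α` as the same convex combination of `1/3` and `2/3`, in opposite orders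
  set t := 2 - 3 * α
  have ht0 : 0 ≤ t := by linarith
  have ht1 : 0 ≤ 1 - t := by linarith
  have h₁ := hconc.2 (by norm_num : (1 / 3 : ℝ) ∈ Ici 0) (by norm_num : (2 / 3 : ℝ) ∈ Ici 0)
    ht0 ht1 (add_sub_cancel t 1)
  have h₂ := hconc.2 (by norm_num : (2 / 3 : ℝ) ∈ Ici 0) (by norm_num : (1 / 3 : ℝ) ∈ Ici 0)
    ht0 ht1 (add_sub_cancel t 1)
  simp only [smul_eq_mul] at h₁ h₂
  rw [show t * (1 / 3) + (1 - t) * (2 / 3) = α by ring] at h₁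
  rw [show t * (2 / 3) + (1 - t) * (1 / 3) = 1 - α by ring] at h₂
  linear_combination h₁ + h₂

lemma mul_rpow_le_rpow_add_rpow {l α k a b : ℝ} (hl0 : 0 ≤ l) (hl1 : l ≤ 1)
    (hα : α ∈ Icc (1 / 3 : ℝ) (2 / 3)) (hk : 0 ≤ k) (ha : α * k ≤ a) (hb : (1 - α) * k ≤ b) :
    ((1 / 3 : ℝ) ^ l + (2 / 3 : ℝ) ^ l) * k ^ l ≤ a ^ l + b ^ l := by
  have hα0 : 0 ≤ α := by linarith [hα.1]
  have hα1 : 0 ≤ 1 - α := by linarith [hα.2]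
  calc ((1 / 3 : ℝ) ^ l + (2 / 3 : ℝ) ^ l) * k ^ l ≤ (α ^ l + (1 - α) ^ l) * k ^ l :=
        mul_le_mul_of_nonneg_right (third_rpow_add_two_thirds_rpow_le hl0 hl1 hα) (by positivity)
    _ = (α * k) ^ l + ((1 - α) * k) ^ l := by
        rw [Real.mul_rpow hα0 hk, Real.mul_rpow hα1 hk]; ring
    _ ≤ a ^ l + b ^ l := by gcongr

lemma potential_split_le {l c A D k α : ℝ} (hl0 : 0 ≤ l) (hl1 : l ≤ 1) (hc : 0 ≤ c)
    (hA : A ≤ 1) (hD : 0 ≤ D) (hDr : D * ((1 / 3 : ℝ) ^ l + (2 / 3 : ℝ) ^ l - 1) = 6 * c)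
    (hk : 1 ≤ k) (hα : α ∈ Icc (1 / 3 : ℝ) (2 / 3)) :
    A * (α * k + c * k ^ l + c) - D * (α * k + c * k ^ l + c) ^ l
      + (A * ((1 - α) * k + c * k ^ l + c) - D * ((1 - α) * k + c * k ^ l + c) ^ l)
      + (c * k ^ l + c) ≤ A * k - D * k ^ l := by
  have hkl : 1 ≤ k ^ l := Real.one_le_rpow hk hl0
  have hs : 0 ≤ c * k ^ l + c := by positivity
  have hgain := mul_le_mul_of_nonneg_left (mul_rpow_le_rpow_add_rpow (k := k)
    (a := α * k + c * k ^ l + c) (b := (1 - α) * k + c * k ^ l + c) hl0 hl1 hα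
    (by linarith) (by linarith) (by linarith)) hD
  have hoverhead : (2 * A + 1) * (c * k ^ l + c) ≤ 6 * c * k ^ l := by
    nlinarith [mul_le_mul_of_nonneg_left hkl hc]
  linear_combination hgain + hoverhead - k ^ l * hDr

lemma le_potential_of_recurrence {l c γ A D : ℝ} {T : ℝ → ℝ} (hl0 : 0 ≤ l) (hl1 : l ≤ 1)
    (hc : 0 ≤ c) (hγ : 1 ≤ γ) (hA : A ≤ 1) (hD : 0 ≤ D)
    (hDr : D * ((1 / 3 : ℝ) ^ l + (2 / 3 : ℝ) ^ l - 1) = 6 * c)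
    (hoverhead : ∀ x, γ / 3 ≤ x → c * x ^ l + c ≤ x / 12)
    (hΦ : ∀ x, γ / 3 ≤ x → D * x ^ l ≤ A * x)
    (hzero : ∀ k : ℝ, 0 ≤ k → k ≤ γ → T k = 0)
    (hrec : ∀ k : ℝ, γ < k →
      T k ≤ sSup ((fun α : ℝ =>
          T (α * k + c * k ^ l + c) + T ((1 - α) * k + c * k ^ l + c)) ''
        Icc (1 / 3 : ℝ) (2 / 3)) + c * k ^ l + c) :
    ∀ x, γ / 3 ≤ x → T x ≤ A * x - D * x ^ l := by
  refine forall_ge_of_contracting_step (a := γ / 3) (b := γ) (q := 3 / 4) (by linarith)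
    (by norm_num) (by norm_num) (fun x hx hxγ => ?_) (fun k hk ih => ?_)
  · rw [hzero x (by linarith) hxγ]
    linarith [hΦ x hx]
  have hk0 : 0 ≤ k := by linarith
  have hs : 0 ≤ c * k ^ l + c := by positivity
  have hsk := hoverhead k (by linarith)
  have harg : ∀ β ∈ Icc (1 / 3 : ℝ) (2 / 3),
      γ / 3 ≤ β * k + c * k ^ l + c ∧ β * k + c * k ^ l + c ≤ 3 / 4 * k := by
    rintro β ⟨hβ1, hβ2⟩
    constructor <;> nlinarith
  have hsup : sSup ((fun α : ℝ =>
      T (α * k + c * k ^ l + c) + T ((1 - α) * k + c * k ^ l + c)) '' Icc (1 / 3 : ℝ) (2 / 3))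
      ≤ A * k - D * k ^ l - (c * k ^ l + c) := by
    refine csSup_le ((nonempty_Icc.2 (by norm_num)).image _) ?_
    rintro _ ⟨α, hα, rfl⟩
    have hα' : 1 - α ∈ Icc (1 / 3 : ℝ) (2 / 3) := ⟨by linarith [hα.2], by linarith [hα.1]⟩
    have h₁ := ih _ (harg α hα).1 (harg α hα).2
    have h₂ := ih _ (harg _ hα').1 (harg _ hα').2
    have := potential_split_le (k := k) hl0 hl1 hc hA hD hDr (by linarith) hα
    dsimp only
    linarith
  linarith [hrec k hk]

theorem recurrence_sublinear {l c : ℝ} (hl0 : 0 < l) (hl1 : l < 1) (hc : 0 < c) :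
    ∀ ε > (0 : ℝ), ∃ γ > (0 : ℝ), ∀ T : ℝ → ℝ,
      (∀ k : ℝ, 0 ≤ T k) →
      (∀ k : ℝ, 0 ≤ k → k ≤ γ → T k = 0) →
      (∀ k : ℝ, γ < k →
        T k ≤ sSup ((fun α : ℝ =>
            T (α * k + c * k ^ l + c) + T ((1 - α) * k + c * k ^ l + c)) ''
          Set.Icc (1/3 : ℝ) (2/3)) + c * k ^ l + c) →
      ∀ k : ℝ, 0 ≤ k → T k ≤ ε * k := by
  intro ε hε
  have hr := one_lt_third_rpow_add_two_thirds_rpow hl1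
  set D := 6 * c / ((1 / 3 : ℝ) ^ l + (2 / 3 : ℝ) ^ l - 1)
  have hD : 0 ≤ D := div_nonneg (by positivity) (by linarith)
  have hDr : D * ((1 / 3 : ℝ) ^ l + (2 / 3 : ℝ) ^ l - 1) = 6 * c :=
    div_mul_cancel₀ _ (by linarith)
  obtain ⟨γ₀, hγ₀⟩ := eventually_atTop.1 <|
    (eventually_mul_rpow_add_le hl1 c (by norm_num : (0 : ℝ) < 1 / 12)).and
      (eventually_mul_rpow_add_le hl1 D (lt_min hε one_pos))
  have hγ₁ := le_max_left γ₀ 1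
  have hone := le_max_right γ₀ 1
  refine ⟨3 * max γ₀ 1, by positivity, fun T _ hzero hrec k hk => ?_⟩
  rcases lt_or_ge k (max γ₀ 1) with hkγ | hkγ
  · rw [hzero k hk (by linarith)]
    positivity
  calc T k ≤ min ε 1 * k - D * k ^ l :=
        le_potential_of_recurrence hl0.le hl1.le hc.le (by linarith) (min_le_right _ _) hD hDr
          (fun x hx => by linarith [(hγ₀ x (by linarith)).1])
          (fun x hx => by linarith [(hγ₀ x (by linarith)).2]) hzero hrec k (by linarith)
    _ ≤ min ε 1 * k := sub_le_self _ (by positivity)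
    _ ≤ ε * k := by gcongr; exact min_le_left _ _
end

section
/- Let G be a connected graph, D ⊆ V(G) a dominating set of G, and suppose the subgraph G[D] has c connected components. Then there exists a connected dominating set D' of G with D ⊆ D' and |D'| ≤ |D| + 2(c − 1). -/
/-!
Take a walk in `G` between two components of `G[D]` and replace each of its vertices by a vertex
of `D` dominating it. Somewhere the replacement switches component, so there is an edge `ab` of
`G` whose ends are dominated by vertices of two different components; adding `a` and `b` to `D`
merges them, at a cost of two vertices and lowering the number of components. Repeating this
`c - 1` times connects `D`.
-/

namespace SimpleGraph

variable {V : Type*} {G : SimpleGraph V}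

def IsDominatingSet (G : SimpleGraph V) (D : Set V) : Prop :=
  ∀ v, v ∈ D ∨ ∃ u ∈ D, G.Adj u v

lemma IsDominatingSet.mono {D D' : Set V} (hD : G.IsDominatingSet D) (h : D ⊆ D') :
    G.IsDominatingSet D' := fun v =>
  (hD v).imp (@h v) fun ⟨u, hu, huv⟩ => ⟨u, h hu, huv⟩

lemma IsDominatingSet.exists_mem_eq_or_adj {D : Set V} (hD : G.IsDominatingSet D) (v : V) :
    ∃ u ∈ D, u = v ∨ G.Adj u v := by
  rcases hD v with hv | ⟨u, hu, huv⟩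
  · exact ⟨v, hv, .inl rfl⟩
  · exact ⟨u, hu, .inr huv⟩

lemma IsDominatingSet.nonempty [Nonempty V] {D : Set V} (hD : G.IsDominatingSet D) :
    D.Nonempty :=
  let ⟨u, hu, _⟩ := hD.exists_mem_eq_or_adj (Classical.arbitrary V)
  ⟨u, hu⟩

lemma IsDominatingSet.exists_adj_of_walk {D : Set V} (hD : G.IsDominatingSet D) {s t : V}
    (p : G.Walk s t) (u : D) (hus : u.1 = s ∨ G.Adj u s) (ht : t ∈ D)
    (hut : ¬ (G.induce D).Reachable u ⟨t, ht⟩) :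
    ∃ x y : D, ∃ a b : V, G.Adj a b ∧ (x.1 = a ∨ G.Adj x a) ∧ (y.1 = b ∨ G.Adj y b) ∧
      ¬ (G.induce D).Reachable x y := by
  induction p generalizing u with
  | nil =>
    rcases hus with rfl | hus
    · exact absurd .rfl hut
    · exact ⟨u, ⟨_, ht⟩, u, _, hus, .inl rfl, .inl rfl, hut⟩
  | @cons s s' t hss' p ih =>
    obtain ⟨w, hw, hws'⟩ := hD.exists_mem_eq_or_adj s'
    by_cases huw : (G.induce D).Reachable u ⟨w, hw⟩
    · exact ih ⟨w, hw⟩ hws' ht fun hwt => hut (huw.trans hwt)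
    · exact ⟨u, ⟨w, hw⟩, s, s', hss', hus, hws', huw⟩

lemma IsDominatingSet.exists_adj_of_not_preconnected {D : Set V} (hG : G.Preconnected)
    (hD : G.IsDominatingSet D) (hconn : ¬ (G.induce D).Preconnected) :
    ∃ x y : D, ∃ a b : V, G.Adj a b ∧ (x.1 = a ∨ G.Adj x a) ∧ (y.1 = b ∨ G.Adj y b) ∧
      ¬ (G.induce D).Reachable x y := by
  obtain ⟨x, y, hxy⟩ : ∃ x y : D, ¬ (G.induce D).Reachable x y := by
    simpa [Preconnected] using hconn
  exact hD.exists_adj_of_walk (hG x y).some x (.inl rfl) y.2 hxy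

lemma card_connectedComponent_induce_lt {D D' : Set V} [Finite (G.induce D).ConnectedComponent]
    (hDD' : D ⊆ D')
    (hcover : ∀ z : D', ∃ x : D, (G.induce D').Reachable (Set.inclusion hDD' x) z)
    {x y : D} (hxy' : (G.induce D').Reachable (Set.inclusion hDD' x) (Set.inclusion hDD' y))
    (hxy : ¬ (G.induce D).Reachable x y) :
    Nat.card (G.induce D').ConnectedComponent < Nat.card (G.induce D).ConnectedComponent := by
  let f := ConnectedComponent.map (G.induceHomOfLE hDD').toHom
  have hsurj : f.Surjective := by
    refine ConnectedComponent.ind fun z => ?_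
    obtain ⟨x, hx⟩ := hcover z
    exact ⟨G.induce D |>.connectedComponentMk x, ConnectedComponent.sound hx⟩
  have hninj : ¬ f.Injective := fun hinj =>
    hxy <| ConnectedComponent.exact <| hinj <| ConnectedComponent.sound hxy'
  have := Finite.of_surjective f hsurj
  have := Fintype.ofFinite (G.induce D).ConnectedComponent
  have := Fintype.ofFinite (G.induce D').ConnectedComponent
  simpa only [Nat.card_eq_fintype_card] using
    Fintype.card_lt_of_surjective_not_injective f hsurj hninj

lemma card_connectedComponent_induce_insert_insert_lt {D : Set V}
    [Finite (G.induce D).ConnectedComponent] {x y : D} {a b : V} (hab : G.Adj a b)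
    (hxa : x.1 = a ∨ G.Adj x a) (hyb : y.1 = b ∨ G.Adj y b)
    (hxy : ¬ (G.induce D).Reachable x y) :
    Nat.card (G.induce (insert a (insert b D))).ConnectedComponent <
      Nat.card (G.induce D).ConnectedComponent := by
  set D' := insert a (insert b D)
  have hDD' : D ⊆ D' := (Set.subset_insert _ _).trans (Set.subset_insert _ _)
  let ι := Set.inclusion hDD'
  have hxa' : (G.induce D').Reachable (ι x) ⟨a, .inl rfl⟩ := by
    rcases hxa with h | h
    · exact (show ι x = ⟨a, .inl rfl⟩ from Subtype.ext h) ▸ .rfl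
    · exact Adj.reachable (by exact h)
  have hyb' : (G.induce D').Reachable (ι y) ⟨b, .inr (.inl rfl)⟩ := by
    rcases hyb with h | h
    · exact (show ι y = ⟨b, .inr (.inl rfl)⟩ from Subtype.ext h) ▸ .rfl
    · exact Adj.reachable (by exact h)
  have hab' : (G.induce D').Reachable ⟨a, .inl rfl⟩ ⟨b, .inr (.inl rfl)⟩ :=
    Adj.reachable (by exact hab)
  refine card_connectedComponent_induce_lt hDD' ?_ (hxa'.trans (hab'.trans hyb'.symm)) hxy
  rintro ⟨z, rfl | rfl | hz⟩
  · exact ⟨x, hxa'⟩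
  · exact ⟨y, hyb'⟩
  · exact ⟨⟨z, hz⟩, .rfl⟩

theorem IsDominatingSet.exists_connected_superset [Finite V] (hG : G.Connected) {D : Set V}
    (hD : G.IsDominatingSet D) :
    ∃ D', D ⊆ D' ∧ G.IsDominatingSet D' ∧ (G.induce D').Connected ∧
      D'.ncard ≤ D.ncard + 2 * (Nat.card (G.induce D).ConnectedComponent - 1) := by
  induction hn : Nat.card (G.induce D).ConnectedComponent using Nat.strong_induction_on
    generalizing D with
  | _ n ih =>
  have := hG.nonempty
  have := hD.nonempty.to_subtype
  by_cases hconn : (G.induce D).Preconnected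
  · exact ⟨D, subset_rfl, hD, ⟨hconn⟩, by omega⟩
  obtain ⟨x, y, a, b, hab, hxa, hyb, hxy⟩ := hD.exists_adj_of_not_preconnected hG.preconnected hconn
  have two_le : 2 ≤ n := hn ▸ Finite.one_lt_card_iff_nontrivial.mpr
    ⟨_, _, mt ConnectedComponent.exact hxy⟩
  have hDD' : D ⊆ insert a (insert b D) :=
    (Set.subset_insert _ _).trans (Set.subset_insert _ _)
  have hcard : (insert a (insert b D)).ncard ≤ D.ncard + 2 := by
    have := Set.ncard_insert_le a (insert b D)
    have := Set.ncard_insert_le b D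
    omega
  have hlt := hn ▸ card_connectedComponent_induce_insert_insert_lt hab hxa hyb hxy
  obtain ⟨D', hD'sub, hD'dom, hD'conn, hD'card⟩ := ih _ hlt (hD.mono hDD') rfl
  exact ⟨D', hDD'.trans hD'sub, hD'dom, hD'conn, by omega⟩

end SimpleGraph

theorem connect_dominating_set {V : Type} [Fintype V] (G : SimpleGraph V)
    (hG : G.Connected) (D : Set V)
    (hD : ∀ v : V, v ∈ D ∨ ∃ u ∈ D, G.Adj u v)
    (c : ℕ) (hc : c = Nat.card (G.induce D).ConnectedComponent) :
    ∃ D' : Set V, D ⊆ D' ∧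
      (∀ v : V, v ∈ D' ∨ ∃ u ∈ D', G.Adj u v) ∧
      (G.induce D').Connected ∧
      D'.ncard ≤ D.ncard + 2 * (c - 1) :=
  hc ▸ SimpleGraph.IsDominatingSet.exists_connected_superset hG hD
end
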